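/- Let G, H be finite digraphs and ξ ∈ H(G,H) a homomorphism. Then for every finite digraph H', the number of homomorphisms ζ ∈ H(G,H') with G_ζ = G_ξ equals the number of strict homomorphisms from G_ξ to H', i.e., #Θ_{G,H'}(ξ) = #S(G_ξ, H'). -/

import Mathlib

/-- A homomorphism between digraphs `(V, A)` and `(W, B)`:
a map sending every arc to an arc. -/
def IsHom {V W : Type} (A : V → V → Prop) (B : W → W → Prop) (f : V → W) : Prop :=
  ∀ ⦃v w : V⦄, A v w → B (f v) (f w)

/-- A strict homomorphism: a homomorphism mapping proper arcs to proper arcs. -/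
def IsStrictHom {V W : Type} (A : V → V → Prop) (B : W → W → Prop) (f : V → W) : Prop :=
  IsHom A B f ∧ ∀ ⦃v w : V⦄, A v w → v ≠ w → f v ≠ f w

/-- Adjacency in a digraph. -/
def DAdj {V : Type} (A : V → V → Prop) (v w : V) : Prop := A v w ∨ A w v

/-- `v` and `w` are connected in `X`: `v = w` (with `v ∈ X`), or there is a line
`z 0, …, z I` inside `X` connecting them, consecutive members being adjacent. -/
def ConnIn {V : Type} (A : V → V → Prop) (X : Set V) (v w : V) : Prop :=
  ∃ (I : ℕ) (z : ℕ → V), z 0 = v ∧ z I = w ∧ (∀ i ≤ I, z i ∈ X) ∧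
    ∀ i < I, DAdj A (z i) (z (i + 1))

/-- `γ_X(v)`: the set of `w ∈ X` connected with `v` in `X`. -/
def gammaSet {V : Type} (A : V → V → Prop) (X : Set V) (v : V) : Set V :=
  {w | ConnIn A X v w}

/-- `Γ_ξ(v)`: the connectivity component of `v` in the preimage `ξ⁻¹(ξ(v))`. -/
def GammaComp {V W : Type} (A : V → V → Prop) (ξ : V → W) (v : V) : Set V :=
  gammaSet A {u | ξ u = ξ v} v

/-- The set of homomorphisms `H(G,H)` (as a type). -/
def HomSet {V W : Type} (A : V → V → Prop) (B : W → W → Prop) : Type :=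
  {f : V → W // IsHom A B f}

/-- The set of strict homomorphisms `S(G,H)` (as a type). -/
def StrictHomSet {V W : Type} (A : V → V → Prop) (B : W → W → Prop) : Type :=
  {f : V → W // IsStrictHom A B f}

/-- The vertex set of the digraph `G_ξ`: the components `Γ_ξ(v)`, `v ∈ V(G)`. -/
def GVert {V W : Type} (A : V → V → Prop) (ξ : V → W) : Type :=
  {C : Set V // ∃ v, C = GammaComp A ξ v}

/-- The arc relation of the digraph `G_ξ`. -/
def GArc {V W : Type} (A : V → V → Prop) (ξ : V → W) :
    GVert A ξ → GVert A ξ → Prop :=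
  fun C D => ∃ a ∈ C.1, ∃ b ∈ D.1, A a b

/-- The canonical map `π_ξ : G → G_ξ`, `v ↦ Γ_ξ(v)`. -/
def piMap {V W : Type} (A : V → V → Prop) (ξ : V → W) (v : V) : GVert A ξ :=
  ⟨GammaComp A ξ v, v, rfl⟩

/-- `Θ_{G,H'}(ξ)`: the homomorphisms `ζ : G → H'` with `G_ζ = G_ξ`
(equality of the digraphs `G_ζ` and `G_ξ`, i.e. of their vertex sets,
which determines the arc sets). -/
def ThetaSet {V W W' : Type} (A : V → V → Prop) (B' : W' → W' → Prop)
    (ξ : V → W) : Set (V → W') :=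
  {ζ | IsHom A B' ζ ∧
    {C : Set V | ∃ v, C = GammaComp A ζ v} = {C : Set V | ∃ v, C = GammaComp A ξ v}}

/-- `R ⊑_Γ S` with respect to a class `D'` of finite digraphs: a strong Γ-scheme
from `R` to `S` exists, i.e. for every finite digraph `G ∈ D'` an injective map
`ρ_G : H(G,R) → H(G,S)` with `Γ_{ρ_G(ξ)}(v) = Γ_ξ(v)` for all `ξ`, `v`. -/
def SqGamma (D' : (V : Type) → (V → V → Prop) → Prop)
    {VR VS : Type} (R : VR → VR → Prop) (S : VS → VS → Prop) : Prop :=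
  ∀ (V : Type) [Finite V] [Nonempty V] (A : V → V → Prop), D' V A →
    ∃ ρ : HomSet A R → HomSet A S, Function.Injective ρ ∧
      ∀ (ξ : HomSet A R) (v : V), GammaComp A (ρ ξ).1 v = GammaComp A ξ.1 v

/-- The class `T_a`: digraphs whose loop-removed digraph is acyclic,
i.e. every closed walk is trivial. -/
def Ta {V : Type} (A : V → V → Prop) : Prop :=
  ∀ (z : ℕ → V) (I : ℕ), 0 < I →
    (∀ i < I, A (z i) (z (i + 1)) ∧ z i ≠ z (i + 1)) → z 0 ≠ z I

/-- A poset: a reflexive, antisymmetric, transitive digraph. -/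
def IsPosetRel {V : Type} (A : V → V → Prop) : Prop :=
  Reflexive A ∧ AntiSymmetric A ∧ Transitive A

/-- An element of `P^*`: an irreflexive, antisymmetric, transitive digraph. -/
def IsStrictPosetRel {V : Type} (A : V → V → Prop) : Prop :=
  Irreflexive A ∧ AntiSymmetric A ∧ Transitive A

/-- The direct (disjoint) sum of two digraphs. -/
def sumRel {V W : Type} (A : V → V → Prop) (B : W → W → Prop) :
    V ⊕ W → V ⊕ W → Prop
  | Sum.inl v, Sum.inl w => A v w
  | Sum.inr v, Sum.inr w => B v w
  | _, _ => False

/-- The open neighborhood `N(v)`. -/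
def Nbr {Z : Type} (A : Z → Z → Prop) (v : Z) : Set Z :=
  {w | w ≠ v ∧ (A v w ∨ A w v)}

/-- The in-neighborhood `N^in(v)`. -/
def NIn {Z : Type} (A : Z → Z → Prop) (v : Z) : Set Z :=
  {w | w ≠ v ∧ A w v}

/-- The out-neighborhood `N^out(v)`. -/
def NOut {Z : Type} (A : Z → Z → Prop) (v : Z) : Set Z :=
  {w | w ≠ v ∧ A v w}

/-- `A_r`: the arcs of `R` minus all arcs between `M` and `X`. -/
def ArRel {Z : Type} (A : Z → Z → Prop) (X M : Set Z) : Z → Z → Prop :=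
  fun v w => A v w ∧ ¬(v ∈ M ∧ w ∈ X) ∧ ¬(v ∈ X ∧ w ∈ M)

/-- `A_d = { m β(x) : m x ∈ A(R) ∩ (M × X) }`. -/
def AdRel {Z : Type} (A : Z → Z → Prop) (X M : Set Z) (β : Z → Z) : Z → Z → Prop :=
  fun v w => v ∈ M ∧ ∃ x ∈ X, A v x ∧ w = β x

/-- `A_u = { β(x) m : x m ∈ A(R) ∩ (X × M) }`. -/
def AuRel {Z : Type} (A : Z → Z → Prop) (X M : Set Z) (β : Z → Z) : Z → Z → Prop :=
  fun v w => w ∈ M ∧ ∃ x ∈ X, A x w ∧ v = β x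

/-- The rearranged digraph `S`, with `A(S) = A_r ∪ A_d ∪ A_u`. -/
def SRel {Z : Type} (A : Z → Z → Prop) (X M : Set Z) (β : Z → Z) : Z → Z → Prop :=
  fun v w => ArRel A X M v w ∨ AdRel A X M β v w ∨ AuRel A X M β v w

/-- `U_ξ = { v : ξ(v) ∈ T and ξ[N_G(v)] ∩ M ≠ ∅ }` (for `T = X`; with `T = Y`
this gives `U'_ζ`). -/
def USet {V Z : Type} (AG : V → V → Prop) (T M : Set Z) (ξ : V → Z) : Set V :=
  {v | ξ v ∈ T ∧ ∃ w ∈ Nbr AG v, ξ w ∈ M}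

open Classical in
/-- The rearranged homomorphism `ρ_G(ξ)`: `β(ξ(v))` on `U_ξ` and `ξ(v)` elsewhere. -/
noncomputable def rhoMap {V Z : Type} (AG : V → V → Prop) (X M : Set Z) (β : Z → Z)
    (ξ : V → Z) : V → Z :=
  fun v => if v ∈ USet AG X M ξ then β (ξ v) else ξ v

/-!
A member `ζ` of `Θ_{G,H'}(ξ)` is constant on the components of `ξ`, so it factors as
`η ∘ π_ξ` through the surjection `π_ξ`, and `η` is strict: two adjacent vertices with the same
`ζ`-value lie in one `ζ`-component, which is a `ξ`-component. Conversely, for a strict `η`,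
adjacent vertices have the same `η ∘ π_ξ`-value exactly when they lie in one `ξ`-component, so
`η ∘ π_ξ` has the components of `ξ`. Hence `η ↦ η ∘ π_ξ` is a bijection `S(G_ξ, H') ≃ Θ_{G,H'}(ξ)`.
-/

section DigraphQuotient

open Relation

variable {V W W' : Type} {A : V → V → Prop}

def FiberAdj (A : V → V → Prop) (ξ : V → W) (a b : V) : Prop :=
  ξ a = ξ b ∧ DAdj A a b

instance (ξ : V → W) : Std.Symm (FiberAdj A ξ) :=
  ⟨fun _ _ h => ⟨h.1.symm, h.2.symm⟩⟩

theorem mem_gammaComp_iff {ξ : V → W} {v w : V} :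
    w ∈ GammaComp A ξ v ↔ ReflTransGen (FiberAdj A ξ) v w := by
  constructor
  · rintro ⟨I, z, rfl, rfl, hmem, hadj⟩
    suffices ∀ i ≤ I, ReflTransGen (FiberAdj A ξ) (z 0) (z i) from this I le_rfl
    intro i
    induction i with
    | zero => exact fun _ => .refl
    | succ i ih =>
      intro hi
      have hfib : ξ (z i) = ξ (z (i + 1)) := (hmem i (by omega)).trans (hmem (i + 1) hi).symm
      exact (ih (by omega)).tail ⟨hfib, hadj i hi⟩
  · intro h
    induction h with
    | refl => exact ⟨0, fun _ => v, rfl, rfl, fun _ _ => rfl, fun _ h => absurd h (by omega)⟩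
    | @tail b c _ hbc ih =>
      obtain ⟨I, z, h0, hI, hmem, hadj⟩ := ih
      have hc : ξ c = ξ v := hbc.1.symm.trans (hI ▸ hmem I le_rfl)
      refine ⟨I + 1, fun i => if i ≤ I then z i else c, by simp [h0], by simp, ?_, ?_⟩
      · intro i _
        dsimp only
        split_ifs with h
        exacts [hmem i h, hc]
      · intro i hi
        rcases Nat.lt_or_ge i I with h | h
        · simpa [h.le, Nat.succ_le_of_lt h] using hadj i h
        · obtain rfl : i = I := by omega
          simpa [hI] using hbc.2

theorem mem_gammaComp_self (ξ : V → W) (v : V) : v ∈ GammaComp A ξ v :=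
  mem_gammaComp_iff.2 .refl

theorem eq_of_mem_gammaComp {ξ : V → W} {v w : V} (h : w ∈ GammaComp A ξ v) : ξ w = ξ v := by
  obtain ⟨I, z, -, rfl, hmem, -⟩ := h
  exact hmem I le_rfl

theorem mem_gammaComp_of_dAdj {ξ : V → W} {a b : V} (hab : ξ a = ξ b) (hadj : DAdj A a b) :
    b ∈ GammaComp A ξ a :=
  mem_gammaComp_iff.2 (.single ⟨hab, hadj⟩)

theorem gammaComp_eq_gammaComp_iff {ξ : V → W} {a b : V} :
    GammaComp A ξ a = GammaComp A ξ b ↔ b ∈ GammaComp A ξ a := by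
  refine ⟨fun h => h ▸ mem_gammaComp_self ξ b, fun h => Set.ext fun u => ?_⟩
  have hab := mem_gammaComp_iff.1 h
  simp only [mem_gammaComp_iff]
  exact ⟨fun hau => (Std.Symm.symm _ _ hab).trans hau, hab.trans⟩

theorem gammaComp_subset_gammaComp {ξ : V → W} {ζ : V → W'}
    (h : ∀ ⦃a b⦄, ξ a = ξ b → DAdj A a b → ζ a = ζ b) (v : V) :
    GammaComp A ξ v ⊆ GammaComp A ζ v := fun _ hw =>
  mem_gammaComp_iff.2 <|
    ReflTransGen.mono (fun _ _ hab => ⟨h hab.1 hab.2, hab.2⟩) _ _ (mem_gammaComp_iff.1 hw)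

theorem setOf_gammaComp_eq_iff {ξ : V → W} {ζ : V → W'} :
    {C : Set V | ∃ v, C = GammaComp A ζ v} = {C : Set V | ∃ v, C = GammaComp A ξ v} ↔
      ∀ v, GammaComp A ζ v = GammaComp A ξ v := by
  refine ⟨fun h v => ?_, fun h => by simp only [h]⟩
  obtain ⟨u, hu⟩ : GammaComp A ζ v ∈ {C : Set V | ∃ u, C = GammaComp A ξ u} :=
    h ▸ ⟨v, rfl⟩
  rw [hu, gammaComp_eq_gammaComp_iff.2 (hu ▸ mem_gammaComp_self ζ v)]

theorem piMap_eq_piMap_iff {ξ : V → W} {a b : V} :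
    piMap A ξ a = piMap A ξ b ↔ b ∈ GammaComp A ξ a :=
  Subtype.ext_iff.trans gammaComp_eq_gammaComp_iff

theorem piMap_eq_iff_mem {ξ : V → W} {a : V} {C : GVert A ξ} : piMap A ξ a = C ↔ a ∈ C.1 := by
  obtain ⟨C, v, rfl⟩ := C
  exact (Subtype.ext_iff.trans eq_comm).trans gammaComp_eq_gammaComp_iff

theorem piMap_surjective (ξ : V → W) : Function.Surjective (piMap A ξ) :=
  fun ⟨_, v, hv⟩ => ⟨v, Subtype.ext hv.symm⟩

theorem gArc_piMap {ξ : V → W} {a b : V} (h : A a b) : GArc A ξ (piMap A ξ a) (piMap A ξ b) :=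
  ⟨a, mem_gammaComp_self ξ a, b, mem_gammaComp_self ξ b, h⟩

variable {B' : W' → W' → Prop}

theorem gammaComp_comp_piMap {ξ : V → W} {η : GVert A ξ → W'}
    (hη : IsStrictHom (GArc A ξ) B' η) (v : V) :
    GammaComp A (η ∘ piMap A ξ) v = GammaComp A ξ v := by
  have hsame : ∀ ⦃a b⦄, η (piMap A ξ a) = η (piMap A ξ b) → DAdj A a b →
      piMap A ξ a = piMap A ξ b := by
    rintro a b hab (h | h)
    · exact not_imp_not.1 (hη.2 (gArc_piMap h)) hab
    · exact (not_imp_not.1 (hη.2 (gArc_piMap h)) hab.symm).symm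
  refine (gammaComp_subset_gammaComp (fun a b hab hadj => ?_) v).antisymm
    (gammaComp_subset_gammaComp (fun a b hab hadj => ?_) v)
  · exact (eq_of_mem_gammaComp (piMap_eq_piMap_iff.1 (hsame hab hadj))).symm
  · exact congrArg η (piMap_eq_piMap_iff.2 (mem_gammaComp_of_dAdj hab hadj))

noncomputable def descend (ξ : V → W) (ζ : V → W') : GVert A ξ → W' :=
  ζ ∘ Function.surjInv (piMap_surjective ξ)

theorem descend_piMap {ξ : V → W} {ζ : V → W'}
    (hζ : ∀ ⦃v w⦄, w ∈ GammaComp A ξ v → ζ w = ζ v) (v : V) :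
    descend ξ ζ (piMap A ξ v) = ζ v :=
  (hζ (piMap_eq_piMap_iff.1 (Function.surjInv_eq (piMap_surjective ξ) (piMap A ξ v)))).symm

theorem apply_eq_of_gammaComp_eq {ξ : V → W} {ζ : V → W'}
    (h : ∀ v, GammaComp A ζ v = GammaComp A ξ v) ⦃v w : V⦄ (hw : w ∈ GammaComp A ξ v) :
    ζ w = ζ v :=
  eq_of_mem_gammaComp (h v ▸ hw)

theorem isStrictHom_descend {ξ : V → W} {ζ : V → W'} (hζ : IsHom A B' ζ)
    (h : ∀ v, GammaComp A ζ v = GammaComp A ξ v) : IsStrictHom (GArc A ξ) B' (descend ξ ζ) := by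
  have hC : ∀ {a : V} {C : GVert A ξ}, a ∈ C.1 → descend ξ ζ C = ζ a := fun ha =>
    piMap_eq_iff_mem.2 ha ▸ descend_piMap (apply_eq_of_gammaComp_eq h) _
  refine ⟨?_, ?_⟩
  · rintro C D ⟨a, ha, b, hb, hab⟩
    rw [hC ha, hC hb]
    exact hζ hab
  · rintro C D ⟨a, ha, b, hb, hab⟩ hCD heq
    rw [hC ha, hC hb] at heq
    have hba : b ∈ GammaComp A ξ a := h a ▸ mem_gammaComp_of_dAdj heq (Or.inl hab)
    exact hCD ((piMap_eq_iff_mem.2 ha).symm.trans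
      ((piMap_eq_piMap_iff.2 hba).trans (piMap_eq_iff_mem.2 hb)))

theorem range_comp_piMap (ξ : V → W) :
    Set.range (fun η : StrictHomSet (GArc A ξ) B' => η.1 ∘ piMap A ξ) = ThetaSet A B' ξ := by
  ext ζ
  simp only [ThetaSet, Set.mem_ofPred_eq, setOf_gammaComp_eq_iff]
  constructor
  · rintro ⟨η, rfl⟩
    exact ⟨fun a b hab => η.2.1 (gArc_piMap hab), gammaComp_comp_piMap η.2⟩
  · rintro ⟨hζ, h⟩
    exact ⟨⟨descend ξ ζ, isStrictHom_descend hζ h⟩, funext (descend_piMap (apply_eq_of_gammaComp_eq h))⟩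

end DigraphQuotient

theorem stmt5_general {V W W' : Type}
    (A : V → V → Prop) (B' : W' → W' → Prop)
    (ξ : V → W) :
    Nat.card ↥(ThetaSet A B' ξ) = Nat.card (StrictHomSet (GArc A ξ) B') := by
  rw [← range_comp_piMap]
  exact Nat.card_range_of_injective fun η₁ η₂ h =>
    Subtype.ext ((piMap_surjective ξ).injective_comp_right h)

/-- For a homomorphism `ξ : G → H` and every finite digraph `H'`:
`#Θ_{G,H'}(ξ) = #S(G_ξ, H')`. -/
theorem stmt5 {V W W' : Type} [Finite V] [Nonempty V] [Finite W] [Nonempty W]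
    [Finite W'] [Nonempty W']
    (A : V → V → Prop) (B : W → W → Prop) (B' : W' → W' → Prop)
    (ξ : V → W) (hξ : IsHom A B ξ) :
    Nat.card ↥(ThetaSet A B' ξ) = Nat.card (StrictHomSet (GArc A ξ) B') :=
  stmt5_general A B' ξ
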